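/- arXiv:2104.11361 — 2 statements merged into one kernel-verified Lean document; each statement's English description precedes it below -/
import Mathlib

section
/- Let C be an abelian category, X ⊆ C, and (A,B) a right X-complete pair. Then for any M ∈ C, id_X(M) = max{ id_{A∩X}(M), id_{B∩X}(M) }. -/
open CategoryTheory CategoryTheory.Limits

universe w v u

variable {C : Type u} [Category.{v} C] [Abelian C] [HasExt.{w} C]

/-- `Ext^i(M, N) = 0`. -/
def extZero (M N : C) (i : ℕ) : Prop := Subsingleton (Abelian.Ext M N i)

/-- `0 → A → B → D → 0` is a short exact sequence. -/
def IsSES {A B D : C} (f : A ⟶ B) (g : B ⟶ D) : Prop :=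
  ∃ w : f ≫ g = 0, (ShortComplex.mk f g w).ShortExact

/-- There exists a short exact sequence `0 → A → B → D → 0`. -/
def SES (A B D : C) : Prop := ∃ (f : A ⟶ B) (g : B ⟶ D), IsSES f g

/-- The right orthogonal class `𝒯^⊥` (vanishing of `Ext^i` for all `i > 0`). -/
def rPerp (𝒯 : Set C) : Set C := {N | ∀ M ∈ 𝒯, ∀ i, 0 < i → extZero M N i}

/-- The right `1`-st orthogonal class `𝒯^{⊥₁}`. -/
def rPerp1 (𝒯 : Set C) : Set C := {N | ∀ M ∈ 𝒯, extZero M N 1}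

/-- The left orthogonal class `⊥𝒮`. -/
def lPerp (𝒮 : Set C) : Set C := {M | ∀ N ∈ 𝒮, ∀ i, 0 < i → extZero M N i}

/-- The left `1`-st orthogonal class `⊥₁𝒮`. -/
def lPerp1 (𝒮 : Set C) : Set C := {M | ∀ N ∈ 𝒮, extZero M N 1}

/-- `α` is a relative cogenerator in `𝒳`. -/
def IsRelCogen (α 𝒳 : Set C) : Prop :=
  α ⊆ 𝒳 ∧ ∀ X ∈ 𝒳, ∃ (W X' : C), W ∈ α ∧ X' ∈ 𝒳 ∧ SES X W X'

/-- `β` is a relative generator in `𝒳`. -/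
def IsRelGen (β 𝒳 : Set C) : Prop :=
  β ⊆ 𝒳 ∧ ∀ X ∈ 𝒳, ∃ (X' W : C), W ∈ β ∧ X' ∈ 𝒳 ∧ SES X' W X

/-- `pd_𝒳(𝒯) ≤ n`. -/
def pdLE (𝒳 𝒯 : Set C) (n : ℕ) : Prop :=
  ∀ M ∈ 𝒯, ∀ X ∈ 𝒳, ∀ k, n < k → extZero M X k

/-- `𝒴` is closed by `n`-quotients in `𝒳`: for any exact sequence
`0 → K n → Y (n-1) → ⋯ → Y 0 → K 0 → 0` (encoded by its short exact pieces
`0 → K (i+1) → Y i → K i → 0`) with all `Y i ∈ 𝒴` and all kernels `K i ∈ 𝒳`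
(in particular the end terms), the end term `K 0` is in `𝒴`. -/
def ClosedByQuotients (𝒴 𝒳 : Set C) (n : ℕ) : Prop :=
  ∀ (K Y : ℕ → C),
    (∀ i < n, Y i ∈ 𝒴) →
    (∀ i ≤ n, K i ∈ 𝒳) →
    (∀ i < n, SES (K (i + 1)) (Y i) (K i)) →
    K 0 ∈ 𝒴

/-- `M` has a `𝒴_𝒳`-coresolution of length `n`, i.e. an exact sequence
`0 → M → Y 0 → ⋯ → Y (n-1) → Z n → 0` with `Z n ∈ 𝒳 ∩ 𝒴`, `Y i ∈ 𝒴`, and all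
intermediate images `Z i ∈ 𝒳`. -/
def CoresLen (𝒴 𝒳 : Set C) (M : C) (n : ℕ) : Prop :=
  ∃ (Z Y : ℕ → C), Z 0 = M ∧ Z n ∈ 𝒳 ∩ 𝒴 ∧
    (∀ i < n, Y i ∈ 𝒴) ∧ (∀ i, 0 < i → i < n → Z i ∈ 𝒳) ∧
    (∀ i < n, SES (Z i) (Y i) (Z (i + 1)))

/-- The `𝒴_𝒳`-coresolution dimension of `M`, as an extended natural number. -/
noncomputable def coresdim (𝒴 𝒳 : Set C) (M : C) : ℕ∞ :=
  sInf {e : ℕ∞ | ∃ m : ℕ, e = (m : ℕ∞) ∧ CoresLen 𝒴 𝒳 M m}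

/-- The `𝒳`-injective dimension of `M`, as an extended natural number. -/
noncomputable def relId (𝒳 : Set C) (M : C) : ℕ∞ :=
  sInf {e : ℕ∞ | ∃ m : ℕ, e = (m : ℕ∞) ∧ ∀ X ∈ 𝒳, ∀ k, m < k → extZero X M k}

/-- `𝒯` is precovering. -/
def Precovering (𝒯 : Set C) : Prop :=
  ∀ M : C, ∃ (Z : C) (f : Z ⟶ M), Z ∈ 𝒯 ∧
    ∀ (Z' : C) (h : Z' ⟶ M), Z' ∈ 𝒯 → ∃ h' : Z' ⟶ Z, h' ≫ f = h

/-- `𝒯` is preenveloping. -/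
def Preenveloping (𝒯 : Set C) : Prop :=
  ∀ M : C, ∃ (Z : C) (f : M ⟶ Z), Z ∈ 𝒯 ∧
    ∀ (Z' : C) (h : M ⟶ Z'), Z' ∈ 𝒯 → ∃ h' : Z ⟶ Z', f ≫ h' = h

/-- `𝒯 = add 𝒯`: closed under finite coproducts and under direct summands (retracts). -/
def IsAddClosed (𝒯 : Set C) : Prop :=
  (∀ A B : C, A ∈ 𝒯 → B ∈ 𝒯 → (A ⊞ B) ∈ 𝒯) ∧
  (∀ (A B : C) (i : A ⟶ B) (r : B ⟶ A), i ≫ r = 𝟙 A → B ∈ 𝒯 → A ∈ 𝒯)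

/-- Closed under direct summands (retracts). -/
def IsSmdClosed (𝒯 : Set C) : Prop :=
  ∀ (A B : C) (i : A ⟶ B) (r : B ⟶ A), i ≫ r = 𝟙 A → B ∈ 𝒯 → A ∈ 𝒯

/-- Closed under extensions. -/
def IsExtClosed (𝒯 : Set C) : Prop :=
  ∀ (A E B : C), A ∈ 𝒯 → B ∈ 𝒯 → SES A E B → E ∈ 𝒯

/-- `ℬ` is `𝒳`-coresolving: it contains an `𝒳`-injective relative cogenerator in `𝒳`,
is closed under mono-cokernels in `ℬ ∩ 𝒳`, and is closed under extensions. -/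
def IsCoresolving (ℬ 𝒳 : Set C) : Prop :=
  (∃ α : Set C, α ⊆ ℬ ∩ 𝒳 ∧ (∀ X ∈ 𝒳, ∀ A ∈ α, ∀ i, 0 < i → extZero X A i) ∧
    IsRelCogen α 𝒳) ∧
  (∀ (M M' M'' : C), M ∈ ℬ ∩ 𝒳 → M' ∈ ℬ ∩ 𝒳 → SES M M' M'' → M'' ∈ ℬ) ∧
  IsExtClosed ℬ

/-- `(𝒜, ℬ)` is a left `𝒳`-complete pair. -/
def LeftComplete (𝒜 ℬ 𝒳 : Set C) : Prop :=
  ∀ X ∈ 𝒳, ∃ B A : C, B ∈ ℬ ∩ 𝒳 ∧ A ∈ 𝒜 ∩ 𝒳 ∧ SES B A X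

/-- `(𝒜, ℬ)` is a right `𝒳`-complete pair. -/
def RightComplete (𝒜 ℬ 𝒳 : Set C) : Prop :=
  ∀ X ∈ 𝒳, ∃ B A : C, B ∈ ℬ ∩ 𝒳 ∧ A ∈ 𝒜 ∩ 𝒳 ∧ SES X B A

/-- `(𝒜, ℬ)` is an `𝒳`-hereditary pair. -/
def IsHereditary (𝒜 ℬ 𝒳 : Set C) : Prop :=
  ∀ A ∈ 𝒜 ∩ 𝒳, ∀ B ∈ ℬ ∩ 𝒳, ∀ i, 1 ≤ i → extZero A B i

/-- `M` has a (possibly infinite) `𝒴_𝒳`-coresolution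
`0 → M → Y 0 → Y 1 → ⋯` with `Y i ∈ 𝒴 ∪ {0}` and all images in `𝒳 ∪ {0}`. -/
def InfCores (𝒳 𝒴 : Set C) (M : C) : Prop :=
  ∃ (Z Y : ℕ → C), Z 0 = M ∧
    (∀ i, Y i ∈ 𝒴 ∨ IsZero (Y i)) ∧
    (∀ i, 0 < i → Z i ∈ 𝒳 ∨ IsZero (Z i)) ∧
    (∀ i, SES (Z i) (Y i) (Z (i + 1)))

/-- The class `(𝒳,𝒴)_∞^∨`. -/
def InfCoresClass (𝒳 𝒴 : Set C) : Set C := {M | M ∈ 𝒳 ∧ InfCores 𝒳 𝒴 M}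

/-- The class `(𝒳,𝒴)^∨`. -/
def FinCoresClass (𝒳 𝒴 : Set C) : Set C := {M | M ∈ 𝒳 ∧ ∃ m : ℕ, CoresLen 𝒴 𝒳 M m}

lemma extZero_of_ses {X B A M : C} (h : SES X B A) (k : ℕ)
    (hB : extZero B M k) (hA : extZero A M (k + 1)) : extZero X M k := by
  obtain ⟨f, g, w, hse⟩ := h
  have hA' : Subsingleton (Abelian.Ext A M (k + 1)) := hA
  have hB' : Subsingleton (Abelian.Ext B M k) := hB
  have key : ∀ x : Abelian.Ext X M k, x = 0 := by
    intro x
    obtain ⟨x₂, hx₂⟩ := Abelian.Ext.contravariant_sequence_exact₁ hse M x (n₁ := k + 1) (by omega)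
      (Subsingleton.elim _ _)
    rw [← hx₂, Subsingleton.elim x₂ 0, Abelian.Ext.comp_zero]
  exact ⟨fun a b => by rw [key a, key b]⟩

/-- if `(𝒜, ℬ)` is a right `𝒳`-complete pair, then for any `M`,
`id_𝒳(M) = max {id_{𝒜∩𝒳}(M), id_{ℬ∩𝒳}(M)}`. -/
theorem stmt_14 (𝒳 𝒜 ℬ : Set C) (hrc : RightComplete 𝒜 ℬ 𝒳) (M : C) :
    relId 𝒳 M = max (relId (𝒜 ∩ 𝒳) M) (relId (ℬ ∩ 𝒳) M) := by
  classical
  set SX : Set ℕ∞ := {e : ℕ∞ | ∃ m : ℕ, e = (m : ℕ∞) ∧ ∀ X ∈ 𝒳, ∀ k, m < k → extZero X M k} with hSX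
  set SA : Set ℕ∞ := {e : ℕ∞ | ∃ m : ℕ, e = (m : ℕ∞) ∧ ∀ X ∈ 𝒜 ∩ 𝒳, ∀ k, m < k → extZero X M k} with hSA
  set SB : Set ℕ∞ := {e : ℕ∞ | ∃ m : ℕ, e = (m : ℕ∞) ∧ ∀ X ∈ ℬ ∩ 𝒳, ∀ k, m < k → extZero X M k} with hSB
  have hXA : SX ⊆ SA := fun e ⟨m, hm, hp⟩ =>
    ⟨m, hm, fun X hX k hk => hp X hX.2 k hk⟩
  have hXB : SX ⊆ SB := fun e ⟨m, hm, hp⟩ =>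
    ⟨m, hm, fun X hX k hk => hp X hX.2 k hk⟩
  have hrel : relId 𝒳 M = sInf SX := rfl
  have hrelA : relId (𝒜 ∩ 𝒳) M = sInf SA := rfl
  have hrelB : relId (ℬ ∩ 𝒳) M = sInf SB := rfl
  rw [hrel, hrelA, hrelB]
  refine le_antisymm ?_ (max_le (sInf_le_sInf hXA) (sInf_le_sInf hXB))
  rcases SA.eq_empty_or_nonempty with hA | hA
  · rw [hA, sInf_empty]
    exact le_trans le_top (le_max_left _ _)
  rcases SB.eq_empty_or_nonempty with hB | hB
  · rw [hB, sInf_empty]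
    exact le_trans le_top (le_max_right _ _)
  obtain ⟨mA, hmA, hpA⟩ := csInf_mem hA
  obtain ⟨mB, hmB, hpB⟩ := csInf_mem hB
  have hmem : ((max mA mB : ℕ) : ℕ∞) ∈ SX := by
    refine ⟨max mA mB, rfl, fun X hX k hk => ?_⟩
    obtain ⟨B, A, hBm, hAm, ses⟩ := hrc X hX
    exact extZero_of_ses ses k
      (hpB B hBm k (by omega))
      (hpA A hAm (k + 1) (by omega))
  calc sInf SX ≤ ((max mA mB : ℕ) : ℕ∞) := sInf_le hmem
    _ = max (mA : ℕ∞) (mB : ℕ∞) := Monotone.map_max (fun _ _ h => Nat.cast_le.mpr h)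
    _ = max (sInf SA) (sInf SB) := by rw [hmA, hmB]
end

section
/- Let C be an abelian category, W, ν ⊆ C, and X ⊆ C be such that ν = smd(ν) is a (W∩X)-injective relative cogenerator in W∩X. Then for every M ∈ W∩X admitting a finite ν_X-coresolution, id_{W∩X}(M) = coresdim_ν^X(M); moreover W∩X∩ν_X^∨ = {M ∈ W∩X : id_{W∩X}(M) < ∞}. -/
open CategoryTheory CategoryTheory.Limits

universe w v u

variable {C : Type u} [Category.{v} C] [Abelian C] [HasExt.{w} C]

/-!
For `M ∈ 𝒲 ∩ 𝒳`, the conditions `id_{𝒲∩𝒳}(M) ≤ n` and `coresdim_ν^𝒳(M) ≤ n` coincide, by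
induction on `n`: peel off the first short exact sequence `0 → M → N → M' → 0` of a coresolution
(or of the cogenerator) and shift dimension along it, which works because
`Ext^{>0}(𝒲 ∩ 𝒳, ν) = 0`. In the base case `Ext¹(M', M) = 0` splits the sequence, so `M` is a
summand of `N ∈ ν`, hence lies in `ν`.
-/

section ExtVanishing

open Abelian

lemma IsSES.exists_retraction_of_extZero {A B D : C} {f : A ⟶ B} {g : B ⟶ D} (hfg : IsSES f g)
    (h : extZero D A 1) : ∃ r : B ⟶ A, f ≫ r = 𝟙 A := by
  obtain ⟨w, hS⟩ := hfg
  obtain ⟨x, hx⟩ := Ext.contravariant_sequence_exact₁ hS A (Ext.mk₀ (𝟙 A)) rfl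
    (@Subsingleton.elim _ h _ _)
  refine ⟨Ext.homEquiv₀ x, (Ext.mk₀_bijective A A).injective ?_⟩
  rw [← Ext.mk₀_comp_mk₀, Ext.mk₀_homEquiv₀_apply]
  exact hx

lemma IsSES.extZero_left {A B D : C} {f : A ⟶ B} {g : B ⟶ D} (hfg : IsSES f g) {T : C} {k : ℕ}
    (hB : extZero T B (k + 1)) (hD : extZero T D k) : extZero T A (k + 1) := by
  obtain ⟨w, hS⟩ := hfg
  refine subsingleton_of_forall_eq 0 fun x => ?_
  obtain ⟨y, rfl⟩ := Ext.covariant_sequence_exact₁ T hS x (@Subsingleton.elim _ hB _ _) rfl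
  rw [@Subsingleton.elim _ hD y 0, Ext.zero_comp]

lemma IsSES.extZero_right {A B D : C} {f : A ⟶ B} {g : B ⟶ D} (hfg : IsSES f g) {T : C} {k : ℕ}
    (hA : extZero T A (k + 1)) (hB : extZero T B k) : extZero T D k := by
  obtain ⟨w, hS⟩ := hfg
  refine subsingleton_of_forall_eq 0 fun x => ?_
  obtain ⟨y, rfl⟩ := Ext.covariant_sequence_exact₃ T hS x rfl (@Subsingleton.elim _ hA _ _)
  rw [@Subsingleton.elim _ hB y 0, Ext.zero_comp]

end ExtVanishing

section Coresolutions

variable {𝒴 𝒳 : Set C} {M : C}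

omit [HasExt C] in
lemma coresLen_zero_iff : CoresLen 𝒴 𝒳 M 0 ↔ M ∈ 𝒳 ∩ 𝒴 := by
  constructor
  · rintro ⟨Z, Y, rfl, hZ, -⟩
    exact hZ
  · intro hM
    exact ⟨fun _ => M, fun _ => M, rfl, hM, by simp, by omega, by simp⟩

omit [HasExt C] in
lemma coresLen_succ_iff {n : ℕ} :
    CoresLen 𝒴 𝒳 M (n + 1) ↔
      ∃ N M', N ∈ 𝒴 ∧ M' ∈ 𝒳 ∧ SES M N M' ∧ CoresLen 𝒴 𝒳 M' n := by
  constructor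
  · rintro ⟨Z, Y, rfl, hZn, hY, hZ, hSES⟩
    have hZ₁ : Z 1 ∈ 𝒳 := by
      rcases n with _ | n
      exacts [hZn.1, hZ 1 (by omega) (by omega)]
    exact ⟨Y 0, Z 1, hY 0 (by omega), hZ₁, hSES 0 (by omega), fun i => Z (i + 1),
      fun i => Y (i + 1), rfl, hZn, fun i hi => hY _ (by omega),
      fun i _ hi => hZ _ (by omega) (by omega), fun i hi => hSES _ (by omega)⟩
  · rintro ⟨N, M', hN, hM', hMN, Z, Y, rfl, hZn, hY, hZ, hSES⟩
    refine ⟨fun | 0 => M | i + 1 => Z i, fun | 0 => N | i + 1 => Y i, rfl, hZn, ?_, ?_, ?_⟩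
    · rintro (_ | i) hi
      exacts [hN, hY i (by omega)]
    · rintro (_ | _ | i) h0 hi
      exacts [absurd h0 (lt_irrefl 0), hM', hZ _ (by omega) (by omega)]
    · rintro (_ | i) hi
      exacts [hMN, hSES i (by omega)]

end Coresolutions

lemma relId_lt_top_iff {𝒯 : Set C} {M : C} :
    relId 𝒯 M < ⊤ ↔ ∃ m : ℕ, ∀ X ∈ 𝒯, ∀ k, m < k → extZero X M k := by
  simp [relId, sInf_lt_iff]

section Dimension

variable {𝒮 𝒳 ν : Set C} {M : C}

lemma extZero_of_coresLen {T : C} (hT : ∀ N ∈ ν, ∀ i, 0 < i → extZero T N i) {n : ℕ}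
    (hM : CoresLen ν 𝒳 M n) : ∀ k, n < k → extZero T M k := by
  induction n generalizing M with
  | zero => exact hT M (coresLen_zero_iff.1 hM).2
  | succ n ih =>
    obtain ⟨N, M', hN, -, ⟨f, g, hfg⟩, hM'⟩ := coresLen_succ_iff.1 hM
    rintro (_ | k) hk
    · omega
    · exact hfg.extZero_left (hT N hN _ k.succ_pos) (ih hM' k (by omega))

lemma coresLen_of_extZero (h𝒮 : 𝒮 ⊆ 𝒳) (hsmd : IsSmdClosed ν)
    (hinj : ∀ Z ∈ 𝒮, ∀ N ∈ ν, ∀ i, 0 < i → extZero Z N i) (hcog : IsRelCogen ν 𝒮)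
    (hM : M ∈ 𝒮) {n : ℕ} (hvan : ∀ T ∈ 𝒮, ∀ k, n < k → extZero T M k) :
    CoresLen ν 𝒳 M n := by
  induction n generalizing M with
  | zero =>
    obtain ⟨N, M', hN, hM', f, g, hfg⟩ := hcog.2 M hM
    obtain ⟨r, hr⟩ := hfg.exists_retraction_of_extZero (hvan M' hM' 1 one_pos)
    exact coresLen_zero_iff.2 ⟨h𝒮 hM, hsmd M N f r hr hN⟩
  | succ n ih =>
    obtain ⟨N, M', hN, hM', f, g, hfg⟩ := hcog.2 M hM
    refine coresLen_succ_iff.2 ⟨N, M', hN, h𝒮 hM', ⟨f, g, hfg⟩, ih hM' fun T hT k hk => ?_⟩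
    exact hfg.extZero_right (hvan T hT (k + 1) (by omega)) (hinj T hT N hN k (by omega))

lemma coresLen_iff_extZero (h𝒮 : 𝒮 ⊆ 𝒳) (hsmd : IsSmdClosed ν)
    (hinj : ∀ Z ∈ 𝒮, ∀ N ∈ ν, ∀ i, 0 < i → extZero Z N i) (hcog : IsRelCogen ν 𝒮)
    (hM : M ∈ 𝒮) (n : ℕ) : CoresLen ν 𝒳 M n ↔ ∀ T ∈ 𝒮, ∀ k, n < k → extZero T M k :=
  ⟨fun h T hT => extZero_of_coresLen (hinj T hT) h, coresLen_of_extZero h𝒮 hsmd hinj hcog hM⟩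

lemma relId_eq_coresdim (h𝒮 : 𝒮 ⊆ 𝒳) (hsmd : IsSmdClosed ν)
    (hinj : ∀ Z ∈ 𝒮, ∀ N ∈ ν, ∀ i, 0 < i → extZero Z N i) (hcog : IsRelCogen ν 𝒮)
    (hM : M ∈ 𝒮) : relId 𝒮 M = coresdim ν 𝒳 M := by
  simp only [relId, coresdim, coresLen_iff_extZero h𝒮 hsmd hinj hcog hM]

end Dimension

/-- if `ν = smd ν` is a `(𝒲∩𝒳)`-injective relative cogenerator in
`𝒲 ∩ 𝒳`, then for every `M ∈ 𝒲 ∩ 𝒳` admitting a finite `ν_𝒳`-coresolution,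
`id_{𝒲∩𝒳}(M) = coresdim_ν^𝒳(M)`; moreover
`𝒲 ∩ 𝒳 ∩ ν_𝒳^∨ = {M ∈ 𝒲 ∩ 𝒳 | id_{𝒲∩𝒳}(M) < ∞}`. -/
theorem stmt_18 (𝒲 𝒳 ν : Set C) (hsmd : IsSmdClosed ν)
    (hinj : ∀ Z ∈ 𝒲 ∩ 𝒳, ∀ N ∈ ν, ∀ i, 0 < i → extZero Z N i)
    (hcog : IsRelCogen ν (𝒲 ∩ 𝒳)) :
    (∀ M ∈ 𝒲 ∩ 𝒳, (∃ m : ℕ, CoresLen ν 𝒳 M m) →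
      relId (𝒲 ∩ 𝒳) M = coresdim ν 𝒳 M) ∧
    (𝒲 ∩ 𝒳 ∩ {M | ∃ m : ℕ, CoresLen ν 𝒳 M m} =
      {M | M ∈ 𝒲 ∩ 𝒳 ∧ relId (𝒲 ∩ 𝒳) M < ⊤}) := by
  have h𝒮 : 𝒲 ∩ 𝒳 ⊆ 𝒳 := Set.inter_subset_right
  refine ⟨fun M hM _ => relId_eq_coresdim h𝒮 hsmd hinj hcog hM, ?_⟩
  ext M
  refine and_congr_right fun hM => ?_
  exact (exists_congr fun n => coresLen_iff_extZero h𝒮 hsmd hinj hcog hM n).trans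
    relId_lt_top_iff.symm
end
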